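/- Let q ∈ ℂ with q^{2k} ≠ 1 for 1 ≤ k ≤ ℓ, and let F = Σ_{j=1}^{ℓ} I^{⊗(j−1)} ⊗ σ⁻ ⊗ (K^{−1})^{⊗(ℓ−j)} on (ℂ²)^{⊗ℓ}, where σ⁻ = [[0,0],[1,0]] and K = [[q,0],[0,q^{−1}]] (F is the (ℓ−1)-fold coproduct Δ^{(ℓ−1)}(X⁻) of U_q(sl₂) in the spin-1/2 tensor representation). Then for every 0 ≤ n ≤ ℓ, F^{n} v_∅ = [n]_q! · Σ_{S ⊆ {1,…,ℓ}, |S|=n} q^{Σ(S) − nℓ + n(n−1)/2} v_S; that is, F^{n} v_∅ / [n]_q! equals the ket ||ℓ,n⟩. -/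

import Mathlib

/-!
Write `||m, n⟩` for `ketCoef q m n`. Since `σ⁻` turns an `e₀` into an `e₁` and `K⁻¹` acts diagonally,
`(F v)(a) = ∑_{j ∈ S} q^{#(ones after j) - #(zeros after j)} v(a with site j lowered)`, `S` the
ones of `a`. For `|S| = n + 1`, the summand of `j` in `F ||m, n⟩` is `q^{e(S) - n} q^{2 r(j)}`, where
`e` is the ket exponent and `r(j)` the number of elements of `S` after `j`. As `j` runs over `S`,
`r(j)` runs over `0, …, n`, so the geometric sum gives `F ||m, n⟩ = [n + 1]_q ||m, n + 1⟩`, and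
induction on `n` gives `F^n v_∅ = [n]_q! ||m, n⟩`.
-/

open Matrix Complex Finset Filter

noncomputable section

/-- q-integer `[n]_q = (q^n - q^{-n})/(q - q⁻¹)`. -/
def qint (q : ℂ) (n : ℕ) : ℂ := (q ^ n - q⁻¹ ^ n) / (q - q⁻¹)

/-- q-factorial `[n]_q!`. -/
def qfact (q : ℂ) (n : ℕ) : ℂ := ∏ k ∈ Finset.range n, qint q (k + 1)

/-- q-binomial coefficient `[m ¦ n]_q`. -/
def qbinom (q : ℂ) (m n : ℕ) : ℂ := qfact q m / (qfact q (m - n) * qfact q n)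

/-- The set of positions where the configuration `c` equals `1`. -/
def oneSet {m : ℕ} (c : Fin m → Fin 2) : Finset (Fin m) :=
  Finset.univ.filter fun i => c i = 1

/-- The exponent `Σ(S) − n m + n(n−1)/2` (positions counted `1,…,m`). -/
def expKet (m n : ℕ) (S : Finset (Fin m)) : ℤ :=
  (∑ i ∈ S, ((i : ℤ) + 1)) - (n : ℤ) * (m : ℤ) + ((n * (n - 1) / 2 : ℕ) : ℤ)

/-- Coefficients of the ket `||m, n⟩` in the standard basis. -/
def ketCoef (q : ℂ) (m n : ℕ) (c : Fin m → Fin 2) : ℂ :=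
  if (oneSet c).card = n then q ^ expKet m n (oneSet c) else 0

/-- Coefficients of the bra `⟨m, n||` in the standard (bilinear) dual basis. -/
def braCoef (q : ℂ) (m n : ℕ) (c : Fin m → Fin 2) : ℂ :=
  (qbinom q m n)⁻¹ * q ^ ((n : ℤ) * ((m : ℤ) - (n : ℤ))) * ketCoef q m n c

/-- Coefficients of the tilde bra `~⟨m, n||`. -/
def tbraCoef (q : ℂ) (m n : ℕ) (c : Fin m → Fin 2) : ℂ :=
  ((m.choose n : ℂ))⁻¹ *
    (if (oneSet c).card = n then q ^ (-(expKet m n (oneSet c))) else 0)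

/-- Coefficients of the tilde ket `~||m, n⟩`. -/
def tketCoef (q : ℂ) (m n : ℕ) (c : Fin m → Fin 2) : ℂ :=
  qbinom q m n * q ^ (-((n : ℤ) * ((m : ℤ) - (n : ℤ)))) * ((m.choose n : ℂ))⁻¹ *
    (if (oneSet c).card = n then q ^ (-(expKet m n (oneSet c))) else 0)


/-- The basis vector `v_S` of `(ℂ²)^{⊗m}` with `e₁` at the positions of `S`
and `e₀` elsewhere. -/
def vS {m : ℕ} (S : Finset (Fin m)) : (Fin m → Fin 2) → ℂ :=
  fun c => if c = (fun i => if i ∈ S then (1 : Fin 2) else 0) then 1 else 0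

/-- The coproduct operator `F = Δ^{(m−1)}(X⁻) = Σ_j I^{⊗(j−1)} ⊗ σ⁻ ⊗ (K⁻¹)^{⊗(m−j)}`
on `(ℂ²)^{⊗m}`. -/
def Fop (q : ℂ) (m : ℕ) : Matrix (Fin m → Fin 2) (Fin m → Fin 2) ℂ :=
  Matrix.of fun a b => ∑ j : Fin m, ∏ i : Fin m,
    if i < j then (if a i = b i then 1 else 0)
    else if i = j then (if a i = 1 ∧ b i = 0 then 1 else 0)
    else (if a i = b i then (if a i = 0 then q⁻¹ else q) else 0)

lemma oneSet_indicator {m : ℕ} (S : Finset (Fin m)) :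
    oneSet (fun i => if i ∈ S then (1 : Fin 2) else 0) = S := by
  ext i; simp [oneSet]

lemma indicator_oneSet {m : ℕ} (a : Fin m → Fin 2) :
    (fun i => if i ∈ oneSet a then (1 : Fin 2) else 0) = a := by
  funext i
  by_cases h : a i = 1 <;> simp [oneSet, h]
  omega

lemma vS_apply {m : ℕ} (S : Finset (Fin m)) (a : Fin m → Fin 2) :
    vS S a = if oneSet a = S then 1 else 0 := by
  have : a = (fun i => if i ∈ S then 1 else 0) ↔ oneSet a = S :=
    ⟨fun h => h ▸ oneSet_indicator S, fun h => h ▸ (indicator_oneSet a).symm⟩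
  simp only [vS, this]

lemma sum_powersetCard_smul_vS (q : ℂ) (m n : ℕ) :
    ∑ S ∈ powersetCard n (univ : Finset (Fin m)), q ^ expKet m n S • vS S = ketCoef q m n := by
  funext a
  simp only [Finset.sum_apply, Pi.smul_apply, vS_apply, smul_eq_mul, mul_ite, mul_one, mul_zero,
    sum_ite_eq, mem_powersetCard_univ, ketCoef]

def fopFactor (q : ℂ) {m : ℕ} (a b : Fin m → Fin 2) (j i : Fin m) : ℂ :=
  if i < j then (if a i = b i then 1 else 0)
  else if i = j then (if a i = 1 ∧ b i = 0 then 1 else 0)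
  else (if a i = b i then (if a i = 0 then q⁻¹ else q) else 0)

lemma Fop_apply (q : ℂ) {m : ℕ} (a b : Fin m → Fin 2) :
    Fop q m a b = ∑ j, ∏ i, fopFactor q a b j i := rfl

lemma prod_fopFactor_of_ne_update (q : ℂ) {m : ℕ} {a b : Fin m → Fin 2} {j : Fin m}
    (hb : b ≠ Function.update a j 0) : ∏ i, fopFactor q a b j i = 0 := by
  obtain ⟨i, hi⟩ := Function.ne_iff.mp hb
  refine prod_eq_zero (mem_univ i) ?_
  rcases lt_trichotomy i j with h | rfl | h
  · rw [Function.update_of_ne h.ne] at hi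
    simp [fopFactor, h, Ne.symm hi]
  · simp_all [fopFactor]
  · rw [Function.update_of_ne h.ne'] at hi
    simp [fopFactor, h.not_gt, h.ne', Ne.symm hi]

lemma prod_fopFactor_update (q : ℂ) {m : ℕ} (a : Fin m → Fin 2) (j : Fin m) :
    ∏ i, fopFactor q a (Function.update a j 0) j i =
      if a j = 1 then ∏ i ∈ Ioi j, (if a i = 0 then q⁻¹ else q) else 0 := by
  have factor_eq : ∀ i, fopFactor q a (Function.update a j 0) j i =
      (if j < i then (if a i = 0 then q⁻¹ else q) else 1) *
        (if j = i then (if a j = 1 then 1 else 0) else 1) := by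
    intro i
    rcases lt_trichotomy i j with h | rfl | h
    · simp [fopFactor, h, h.ne', h.not_gt, Function.update_of_ne h.ne]
    · simp [fopFactor]
    · simp [fopFactor, h, h.ne, h.ne', h.not_gt]
  rw [prod_congr rfl fun i _ => factor_eq i, prod_mul_distrib, ← prod_filter, filter_lt_eq_Ioi,
    prod_ite_eq, if_pos (mem_univ j), mul_ite, mul_one, mul_zero]

lemma Fop_mulVec_apply (q : ℂ) {m : ℕ} (v : (Fin m → Fin 2) → ℂ) (a : Fin m → Fin 2) :
    (Fop q m *ᵥ v) a =
      ∑ j ∈ oneSet a, (∏ i ∈ Ioi j, (if a i = 0 then q⁻¹ else q)) * v (Function.update a j 0) := by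
  have inner : ∀ j, ∑ b, (∏ i, fopFactor q a b j i) * v b =
      if a j = 1 then (∏ i ∈ Ioi j, (if a i = 0 then q⁻¹ else q)) * v (Function.update a j 0)
      else 0 := by
    intro j
    rw [sum_eq_single (Function.update a j 0)
      (fun b _ hb => by rw [prod_fopFactor_of_ne_update q hb, zero_mul]) (by simp),
      prod_fopFactor_update, ite_mul, zero_mul]
  simp only [mulVec, dotProduct, Fop_apply, sum_mul]
  rw [sum_comm, oneSet, sum_filter]
  exact sum_congr rfl fun j _ => inner j

lemma prod_Ioi_ite_eq_zpow {q : ℂ} (hq0 : q ≠ 0) {m : ℕ} (a : Fin m → Fin 2) (j : Fin m) :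
    ∏ i ∈ Ioi j, (if a i = 0 then q⁻¹ else q) =
      q ^ (2 * (#{i ∈ oneSet a | j < i} : ℤ) - (m - 1 - j)) := by
  have hones : {i ∈ Ioi j | a i = 1} = {i ∈ oneSet a | j < i} := by
    ext i; simp [oneSet, and_comm]
  have hcard : #{i ∈ oneSet a | j < i} + #{i ∈ Ioi j | ¬a i = 1} = m - 1 - j := by
    rw [← hones, card_filter_add_card_filter_not, Fin.card_Ioi]
  rw [← prod_filter_mul_prod_filter_not (Ioi j) (fun i => a i = 1),
    prod_congr rfl fun i hi => if_neg (by simp_all [(mem_filter.mp hi).2]),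
    prod_congr rfl fun i hi => if_pos (by have := (mem_filter.mp hi).2; omega),
    prod_const, prod_const, hones, inv_pow, ← zpow_natCast, ← zpow_natCast, ← _root_.zpow_neg,
    ← zpow_add₀ hq0]
  congr 1
  have := j.isLt
  omega

lemma sum_card_filter_lt {α M : Type*} [LinearOrder α] [AddCommMonoid M] (S : Finset α)
    (f : ℕ → M) : ∑ j ∈ S, f #{i ∈ S | j < i} = ∑ k ∈ range #S, f k := by
  induction S using Finset.induction_on_max generalizing f with
  | empty => simp
  | insert a s ha ih =>
    have hna : a ∉ s := fun h => lt_irrefl a (ha a h)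
    have htop : {i ∈ insert a s | a < i} = ∅ :=
      filter_eq_empty_iff.mpr fun i hi => by
        rcases mem_insert.mp hi with rfl | hi
        exacts [lt_irrefl i, (ha i hi).not_gt]
    have hrest : ∀ j ∈ s, #{i ∈ insert a s | j < i} = #{i ∈ s | j < i} + 1 := fun j hj => by
      rw [filter_insert, if_pos (ha j hj), card_insert_of_notMem fun h => hna (mem_filter.mp h).1]
    rw [sum_insert hna, htop, sum_congr rfl fun j hj => by rw [hrest j hj],
      ih fun k => f (k + 1), card_insert_of_notMem hna, sum_range_succ', card_empty, add_comm]

lemma geom_sum_sq_eq_qint_mul {q : ℂ} (hq0 : q ≠ 0) (hq2 : q ^ 2 ≠ 1) (n : ℕ) :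
    ∑ k ∈ range (n + 1), (q ^ 2) ^ k = qint q (n + 1) * q ^ n := by
  rw [geom_sum_eq hq2, qint, inv_pow]
  field_simp
  ring

lemma qfact_succ (q : ℂ) (n : ℕ) : qfact q (n + 1) = qfact q n * qint q (n + 1) :=
  prod_range_succ _ n

lemma oneSet_update_zero {m : ℕ} (a : Fin m → Fin 2) (j : Fin m) :
    oneSet (Function.update a j 0) = (oneSet a).erase j := by
  ext i
  rcases eq_or_ne i j with rfl | h <;> simp [oneSet, *]

lemma expKet_erase {m n : ℕ} {S : Finset (Fin m)} {j : Fin m} (hj : j ∈ S) :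
    expKet m n (S.erase j) = expKet m (n + 1) S + m - n - (j + 1) := by
  simp only [expKet, sum_erase_eq_sub hj, Nat.triangle_succ]
  push_cast
  ring

theorem Fop_mulVec_ketCoef {q : ℂ} (hq0 : q ≠ 0) (hq2 : q ^ 2 ≠ 1) (m n : ℕ) :
    Fop q m *ᵥ ketCoef q m n = qint q (n + 1) • ketCoef q m (n + 1) := by
  funext a
  rw [Fop_mulVec_apply, Pi.smul_apply, smul_eq_mul, ketCoef]
  split_ifs with hS
  · have summand : ∀ j ∈ oneSet a,
        (∏ i ∈ Ioi j, (if a i = 0 then q⁻¹ else q)) * ketCoef q m n (Function.update a j 0) =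
          q ^ expKet m (n + 1) (oneSet a) * (q ^ n)⁻¹ * (q ^ 2) ^ #{i ∈ oneSet a | j < i} := by
      intro j hj
      have hcard : #((oneSet a).erase j) = n := by rw [card_erase_of_mem hj, hS]; rfl
      rw [ketCoef, oneSet_update_zero, if_pos hcard, prod_Ioi_ite_eq_zpow hq0,
        expKet_erase hj, ← zpow_add₀ hq0, ← zpow_natCast q n, ← _root_.zpow_neg, ← pow_mul,
        ← zpow_natCast, ← zpow_add₀ hq0, ← zpow_add₀ hq0]
      congr 1
      push_cast
      ring
    rw [sum_congr rfl summand, ← mul_sum, sum_card_filter_lt _ fun k => (q ^ 2) ^ k, hS,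
      geom_sum_sq_eq_qint_mul hq0 hq2]
    field_simp
  · refine (sum_eq_zero fun j hj => ?_).trans (mul_zero _).symm
    have hcard : #((oneSet a).erase j) ≠ n := by
      rw [card_erase_of_mem hj]
      have := card_pos.mpr ⟨j, hj⟩
      omega
    rw [ketCoef, oneSet_update_zero, if_neg hcard, mul_zero]

/-- `F^n v_∅ = [n]_q! Σ_{|S|=n} q^{Σ(S)−nm+n(n−1)/2} v_S`; i.e. `F^n v_∅ / [n]_q!`
is the ket `||m,n⟩`. -/
theorem statement6 (q : ℂ) (hq0 : q ≠ 0) (m : ℕ)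
    (hq : ∀ k : ℕ, 1 ≤ k → k ≤ m → q ^ (2 * k) ≠ 1) (n : ℕ) (hn : n ≤ m) :
    (Fop q m ^ n).mulVec (vS (∅ : Finset (Fin m))) =
      qfact q n • ∑ S ∈ Finset.powersetCard n (Finset.univ : Finset (Fin m)),
        q ^ expKet m n S • vS S := by
  rw [sum_powersetCard_smul_vS]
  induction n with
  | zero => simp [qfact, ← sum_powersetCard_smul_vS, expKet]
  | succ n ih =>
    have hq2 : q ^ 2 ≠ 1 := by simpa using hq 1 le_rfl (by omega)
    rw [pow_succ', ← mulVec_mulVec, ih (by omega), mulVec_smul, Fop_mulVec_ketCoef hq0 hq2,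
      smul_smul, qfact_succ]
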